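/- arXiv:1308.4554 — 4 statements merged into one kernel-verified Lean document; each statement's English description precedes it below -/
import Mathlib

section
/- For every p ∈ [1, ∞) and ε ∈ (0,1), the integral ∫₀^∞ (1 - e^{-t})^{p/2} / t^{1 + (1-ε)p/2} dt is finite, and moreover there exist universal constants c, C > 0 (independent of p and ε) such that c(1/ε^{1/p} + 1/(1-ε)^{1/p}) ≤ (∫₀^∞ (1 - e^{-t})^{p/2} / t^{1+(1-ε)p/2} dt)^{1/p} ≤ C(1/ε^{1/p} + 1/(1-ε)^{1/p}). -/
/-!
Since `(1 - e⁻¹) min(t, 1) ≤ 1 - e^{-t} ≤ min(t, 1)` (the lower bound on `[0, 1]` is the chord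
of the convex function `exp`), the integrand is squeezed between `(1 - e⁻¹)^{p/2} g` and `g`, where
`g(t) = min(t, 1)^{p/2} / t^{1 + (1-ε)p/2}` is `t^{εp/2 - 1}` on `(0, 1]` and
`t^{-1-(1-ε)p/2}` on `(1, ∞)`, so `∫ g = 2/(εp) + 2/((1-ε)p)`. After taking `p`-th roots, the
factor `(2/p)^{1/p}` lies in `[e⁻¹, 2]`, and `(x + y)^{1/p}` lies between
`(x^{1/p} + y^{1/p}) / 2` and `x^{1/p} + y^{1/p}`.
-/

open MeasureTheory Real Set

lemma one_sub_exp_neg_nonneg {t : ℝ} (ht : 0 ≤ t) : 0 ≤ 1 - exp (-t) :=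
  sub_nonneg.2 (exp_le_one_iff.2 (neg_nonpos.2 ht))

lemma one_sub_exp_neg_le_min (t : ℝ) : 1 - exp (-t) ≤ min t 1 :=
  le_min (by linarith [add_one_le_exp (-t)]) (by linarith [exp_pos (-t)])

lemma one_sub_exp_neg_one_mul_min_le {t : ℝ} (ht : 0 ≤ t) :
    (1 - exp (-1)) * min t 1 ≤ 1 - exp (-t) := by
  rcases le_total t 1 with h | h
  · have chord := convexOn_exp.2 (mem_univ (-1)) (mem_univ 0) ht (sub_nonneg.2 h) (by ring)
    simp only [smul_eq_mul, mul_zero, add_zero, mul_neg_one, exp_zero, mul_one] at chord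
    rw [min_eq_left h]
    linarith
  · rw [min_eq_right h, mul_one]
    linarith [exp_le_exp.2 (neg_le_neg h)]

section

variable {a b : ℝ}

lemma min_rpow_div_rpow_eqOn_Ioc :
    EqOn (fun t : ℝ => min t 1 ^ (a + b) / t ^ (1 + b)) (fun t => t ^ (a - 1)) (Ioc 0 1) := by
  rintro t ⟨ht, ht1⟩
  simp only [min_eq_left ht1, ← rpow_sub ht]
  ring_nf

lemma min_rpow_div_rpow_eqOn_Ioi :
    EqOn (fun t : ℝ => min t 1 ^ (a + b) / t ^ (1 + b)) (fun t => t ^ (-(1 + b))) (Ioi 1) := by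
  intro t (ht : 1 < t)
  simp only [min_eq_right ht.le, one_rpow, rpow_neg (by linarith : (0:ℝ) ≤ t), one_div]

lemma integrableOn_Ioc_min_rpow_div_rpow (ha : 0 < a) :
    IntegrableOn (fun t : ℝ => min t 1 ^ (a + b) / t ^ (1 + b)) (Ioc 0 1) :=
  ((intervalIntegral.intervalIntegrable_rpow' (by linarith : -1 < a - 1)).1.congr_fun
    min_rpow_div_rpow_eqOn_Ioc.symm measurableSet_Ioc)

lemma integrableOn_Ioi_min_rpow_div_rpow (hb : 0 < b) :
    IntegrableOn (fun t : ℝ => min t 1 ^ (a + b) / t ^ (1 + b)) (Ioi 1) :=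
  (integrableOn_Ioi_rpow_of_lt (by linarith) one_pos).congr_fun
    min_rpow_div_rpow_eqOn_Ioi.symm measurableSet_Ioi

lemma integrableOn_min_rpow_div_rpow (ha : 0 < a) (hb : 0 < b) :
    IntegrableOn (fun t : ℝ => min t 1 ^ (a + b) / t ^ (1 + b)) (Ioi 0) := by
  rw [← Ioc_union_Ioi_eq_Ioi zero_le_one]
  exact (integrableOn_Ioc_min_rpow_div_rpow ha).union (integrableOn_Ioi_min_rpow_div_rpow hb)

lemma integral_min_rpow_div_rpow (ha : 0 < a) (hb : 0 < b) :
    ∫ t in Ioi 0, min t 1 ^ (a + b) / t ^ (1 + b) = 1 / a + 1 / b := by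
  rw [← Ioc_union_Ioi_eq_Ioi zero_le_one, setIntegral_union (Ioc_disjoint_Ioi le_rfl)
      measurableSet_Ioi (integrableOn_Ioc_min_rpow_div_rpow ha)
      (integrableOn_Ioi_min_rpow_div_rpow hb),
    setIntegral_congr_fun measurableSet_Ioc min_rpow_div_rpow_eqOn_Ioc,
    setIntegral_congr_fun measurableSet_Ioi min_rpow_div_rpow_eqOn_Ioi,
    ← intervalIntegral.integral_of_le zero_le_one,
    integral_rpow (Or.inl (by linarith)), integral_Ioi_rpow_of_lt (by linarith) one_pos,
    sub_add_cancel, show -(1 + b) + 1 = -b by ring, one_rpow, one_rpow, zero_rpow ha.ne']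
  field_simp
  ring

end

section

variable {s c t : ℝ}

lemma one_sub_exp_neg_rpow_div_le_min (hs : 0 ≤ s) (ht : 0 < t) :
    (1 - exp (-t)) ^ s / t ^ c ≤ min t 1 ^ s / t ^ c := by
  gcongr
  · exact one_sub_exp_neg_nonneg ht.le
  · exact one_sub_exp_neg_le_min t

lemma min_rpow_div_le_one_sub_exp_neg (hs : 0 ≤ s) (ht : 0 < t) :
    (1 - exp (-1)) ^ s * (min t 1 ^ s / t ^ c) ≤ (1 - exp (-t)) ^ s / t ^ c := by
  rw [← mul_div_assoc, ← mul_rpow (one_sub_exp_neg_nonneg zero_le_one) (le_min ht.le zero_le_one)]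
  gcongr
  · exact mul_nonneg (one_sub_exp_neg_nonneg zero_le_one) (le_min ht.le zero_le_one)
  · exact one_sub_exp_neg_one_mul_min_le ht.le

end

lemma integral_one_sub_exp_neg_rpow_div_rpow_bounds {a b : ℝ} (ha : 0 < a) (hb : 0 < b) :
    IntegrableOn (fun t : ℝ => (1 - exp (-t)) ^ (a + b) / t ^ (1 + b)) (Ioi 0) ∧
    (1 - exp (-1)) ^ (a + b) * (1 / a + 1 / b) ≤
      ∫ t in Ioi 0, (1 - exp (-t)) ^ (a + b) / t ^ (1 + b) ∧
    ∫ t in Ioi 0, (1 - exp (-t)) ^ (a + b) / t ^ (1 + b) ≤ 1 / a + 1 / b := by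
  have hs : 0 ≤ a + b := by positivity
  have hg := integrableOn_min_rpow_div_rpow ha hb
  have hf : IntegrableOn (fun t : ℝ => (1 - exp (-t)) ^ (a + b) / t ^ (1 + b)) (Ioi 0) := by
    refine hg.mono' (Measurable.aestronglyMeasurable (by fun_prop))
      ((ae_restrict_iff' measurableSet_Ioi).2 ?_)
    refine Filter.Eventually.of_forall fun t (ht : 0 < t) => ?_
    rw [norm_of_nonneg (div_nonneg (rpow_nonneg (one_sub_exp_neg_nonneg ht.le) _) (by positivity))]
    exact one_sub_exp_neg_rpow_div_le_min hs ht
  refine ⟨hf, ?_, ?_⟩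
  · rw [← integral_min_rpow_div_rpow ha hb, ← integral_const_mul]
    exact setIntegral_mono_on (hg.const_mul _) hf measurableSet_Ioi
      fun t ht => min_rpow_div_le_one_sub_exp_neg hs ht
  · rw [← integral_min_rpow_div_rpow ha hb]
    exact setIntegral_mono_on hf hg measurableSet_Ioi
      fun t ht => one_sub_exp_neg_rpow_div_le_min hs ht

section

variable {p : ℝ}

lemma exp_neg_one_le_one_div_rpow_one_div (hp : 0 < p) : exp (-1) ≤ (1 / p) ^ (1 / p) := by
  rw [rpow_def_of_pos (by positivity), exp_le_exp, one_div, log_inv, neg_mul, neg_le_neg_iff,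
    ← div_eq_mul_inv, div_le_one hp]
  exact log_le_self hp.le

lemma two_div_rpow_one_div_le_two (hp : 1 ≤ p) : (2 / p) ^ (1 / p) ≤ 2 :=
  calc (2 / p) ^ (1 / p) ≤ 2 ^ (1 / p) :=
        rpow_le_rpow (by positivity) (div_le_self zero_le_two hp) (by positivity)
    _ ≤ 2 := rpow_le_self_of_one_le one_le_two ((div_le_one (by positivity)).2 hp)

lemma rpow_one_div_two_div_mul_add_bounds (hp : 1 ≤ p) {x y : ℝ} (hx : 0 ≤ x) (hy : 0 ≤ y) :
    exp (-1) / 2 * (x ^ (1 / p) + y ^ (1 / p)) ≤ (2 / p * (x + y)) ^ (1 / p) ∧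
    (2 / p * (x + y)) ^ (1 / p) ≤ 2 * (x ^ (1 / p) + y ^ (1 / p)) := by
  have hp0 : 0 < p := by linarith
  have hr : 0 ≤ 1 / p := by positivity
  rw [mul_rpow (by positivity) (add_nonneg hx hy)]
  constructor
  · have hconst : exp (-1) ≤ (2 / p) ^ (1 / p) :=
      (exp_neg_one_le_one_div_rpow_one_div hp0).trans
        (rpow_le_rpow (by positivity) (by gcongr; norm_num) hr)
    have hx' : x ^ (1 / p) ≤ (x + y) ^ (1 / p) := rpow_le_rpow hx (by linarith) hr
    have hy' : y ^ (1 / p) ≤ (x + y) ^ (1 / p) := rpow_le_rpow hy (by linarith) hr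
    calc exp (-1) / 2 * (x ^ (1 / p) + y ^ (1 / p)) ≤ exp (-1) * (x + y) ^ (1 / p) := by
          nlinarith [exp_pos (-1)]
      _ ≤ (2 / p) ^ (1 / p) * (x + y) ^ (1 / p) := by gcongr
  · exact mul_le_mul (two_div_rpow_one_div_le_two hp)
      (rpow_add_le_add_rpow hx hy hr ((div_le_one hp0).2 hp)) (by positivity) zero_le_two

end

theorem stmt2 : ∃ c C : ℝ, 0 < c ∧ 0 < C ∧ ∀ (p ε : ℝ), p ∈ Set.Ici (1:ℝ) → ε ∈ Set.Ioo (0:ℝ) 1 →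
    IntegrableOn (fun t : ℝ => (1 - Real.exp (-t)) ^ (p/2) / t ^ (1 + (1-ε)*p/2)) (Set.Ioi 0) volume ∧
    c * (1 / ε ^ (1/p) + 1 / (1-ε) ^ (1/p)) ≤
      (∫ t in Set.Ioi (0:ℝ), (1 - Real.exp (-t)) ^ (p/2) / t ^ (1 + (1-ε)*p/2)) ^ (1/p) ∧
    (∫ t in Set.Ioi (0:ℝ), (1 - Real.exp (-t)) ^ (p/2) / t ^ (1 + (1-ε)*p/2)) ^ (1/p) ≤
      C * (1 / ε ^ (1/p) + 1 / (1-ε) ^ (1/p)) := by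
  have hk : 0 < 1 - exp (-1) := sub_pos.2 (exp_lt_one_iff.2 neg_one_lt_zero)
  refine ⟨(1 - exp (-1)) ^ (1 / 2 : ℝ) * (exp (-1) / 2), 2,
    mul_pos (rpow_pos_of_pos hk _) (by positivity), two_pos, ?_⟩
  rintro p ε (hp : 1 ≤ p) ⟨hε, hε1⟩
  have hp0 : 0 < p := by linarith
  have hε' : 0 < 1 - ε := sub_pos.2 hε1
  obtain ⟨hf, hlow, hup⟩ :=
    integral_one_sub_exp_neg_rpow_div_rpow_bounds (a := ε * p / 2) (b := (1 - ε) * p / 2)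
      (by positivity) (by positivity)
  rw [show ε * p / 2 + (1 - ε) * p / 2 = p / 2 by ring] at hf hlow hup
  rw [show 1 / (ε * p / 2) + 1 / ((1 - ε) * p / 2) = 2 / p * (1 / ε + 1 / (1 - ε)) by
    field_simp] at hlow hup
  obtain ⟨hroot_low, hroot_up⟩ :=
    rpow_one_div_two_div_mul_add_bounds hp (one_div_nonneg.2 hε.le) (one_div_nonneg.2 hε'.le)
  rw [div_rpow zero_le_one hε.le, div_rpow zero_le_one hε'.le, one_rpow] at hroot_low hroot_up
  have hlow_nonneg : 0 ≤ (1 - exp (-1)) ^ (p / 2) * (2 / p * (1 / ε + 1 / (1 - ε))) :=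
    mul_nonneg (rpow_nonneg hk.le _) (by positivity)
  refine ⟨hf, ?_, (rpow_le_rpow (hlow_nonneg.trans hlow) hup (by positivity)).trans hroot_up⟩
  calc (1 - exp (-1)) ^ (1 / 2 : ℝ) * (exp (-1) / 2) * (1 / ε ^ (1 / p) + 1 / (1 - ε) ^ (1 / p))
      ≤ ((1 - exp (-1)) ^ (p / 2)) ^ (1 / p) * (2 / p * (1 / ε + 1 / (1 - ε))) ^ (1 / p) := by
        rw [← rpow_mul hk.le, show p / 2 * (1 / p) = 1 / 2 by field_simp, mul_assoc]
        gcongr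
    _ = ((1 - exp (-1)) ^ (p / 2) * (2 / p * (1 / ε + 1 / (1 - ε)))) ^ (1 / p) :=
        (mul_rpow (rpow_nonneg hk.le _) (by positivity)).symm
    _ ≤ _ := rpow_le_rpow hlow_nonneg hlow (by positivity)
end

section
/- For every p ∈ [1, ∞) and ε ∈ (0,1), the integral ∫₀^∞ (1 - cos t)^{p/2} / t^{1 + (1-ε)p/2} dt is finite, and (∫₀^∞ (1 - cos t)^{p/2} / t^{1+(1-ε)p/2} dt)^{1/p} is bounded above and below by universal constant multiples of 1/(1-ε)^{1/p}. -/
/-!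
Put `s = (1 - ε) p / 2`. Since `1 - cos t ≤ t²`, the integrand is at most `t ^ (p - 1 - s)` on
`(0, 1]`, and since `1 - cos t ≤ 2` it is at most `2 ^ (p / 2) t ^ (-1 - s)` on `(1, ∞)`; so the
integral is `O(2 ^ (p / 2) / s)`. For the lower bound, one of `cos t`, `cos (t + π)` is `≤ 0`, so
the integrand at `t` or at `t + π` is at least `(t + π) ^ (-1 - s)`; integrating over `t > 0`
gives `π ^ (-s) / s ≤ 2 ∫`. After taking `p`-th roots, `2 ^ (p / 2)`, `π ^ (-s)` and `p` only
contribute bounded factors.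
-/

open MeasureTheory Real Set

theorem setIntegral_Ioi_comp_add_right {E : Type*} [NormedAddCommGroup E] [NormedSpace ℝ E]
    (f : ℝ → E) (a c : ℝ) : ∫ x in Ioi a, f (x + c) = ∫ x in Ioi (a + c), f x := by
  simpa [MeasurableEquiv.addRight, preimage_add_const_Ioi] using
    (measurePreserving_add_right volume c).setIntegral_preimage_emb
      (MeasurableEquiv.addRight c).measurableEmbedding f (Ioi (a + c))

theorem IntegrableOn.comp_add_right_Ioi {E : Type*} [NormedAddCommGroup E] {f : ℝ → E}
    {a c : ℝ} (h : IntegrableOn f (Ioi (a + c))) : IntegrableOn (fun x => f (x + c)) (Ioi a) := by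
  simpa [MeasurableEquiv.addRight, preimage_add_const_Ioi, Function.comp_def] using
    ((measurePreserving_add_right volume c).integrableOn_comp_preimage
      (MeasurableEquiv.addRight c).measurableEmbedding (f := f) (s := Ioi (a + c))).mpr h

noncomputable def oscKernel (a s t : ℝ) : ℝ := (1 - cos t) ^ a / t ^ (1 + s)

section oscKernel

variable {a s t : ℝ}

theorem oscKernel_nonneg (ht : 0 ≤ t) : 0 ≤ oscKernel a s t :=
  div_nonneg (rpow_nonneg (by linarith [cos_le_one t]) _) (rpow_nonneg ht _)

theorem measurable_oscKernel : Measurable (oscKernel a s) := by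
  unfold oscKernel; fun_prop

theorem oscKernel_le_rpow (ha : 0 ≤ a) (ht : 0 < t) :
    oscKernel a s t ≤ t ^ (2 * a - (1 + s)) := by
  have hcos : 1 - cos t ≤ t ^ 2 := by nlinarith [one_sub_sq_div_two_le_cos (x := t)]
  calc oscKernel a s t ≤ (t ^ 2) ^ a / t ^ (1 + s) := by
        unfold oscKernel; gcongr; linarith [cos_le_one t]
    _ = t ^ (2 * a - (1 + s)) := by
        rw [← rpow_natCast, ← rpow_mul ht.le, rpow_sub ht, Nat.cast_ofNat]

theorem oscKernel_le_two_rpow_mul (ha : 0 ≤ a) (ht : 0 < t) :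
    oscKernel a s t ≤ 2 ^ a * t ^ (-(1 + s)) := by
  calc oscKernel a s t ≤ 2 ^ a / t ^ (1 + s) := by
        unfold oscKernel; gcongr
        · linarith [cos_le_one t]
        · linarith [neg_one_le_cos t]
    _ = 2 ^ a * t ^ (-(1 + s)) := by rw [rpow_neg ht.le, div_eq_mul_inv]

theorem integrableOn_rpow_Ioc_zero_one {r : ℝ} (hr : -1 < r) :
    IntegrableOn (fun t : ℝ => t ^ r) (Ioc 0 1) := by
  rw [← intervalIntegrable_iff_integrableOn_Ioc_of_le zero_le_one]
  exact intervalIntegral.intervalIntegrable_rpow' hr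

theorem integral_rpow_Ioc_zero_one {r : ℝ} (hr : -1 < r) :
    ∫ t in Ioc (0 : ℝ) 1, t ^ r = 1 / (r + 1) := by
  rw [← intervalIntegral.integral_of_le zero_le_one, integral_rpow (Or.inl hr), one_rpow,
    zero_rpow (by linarith), sub_zero]

theorem integrableOn_oscKernel_Ioc (ha : 0 ≤ a) (hsa : s < 2 * a) :
    IntegrableOn (oscKernel a s) (Ioc 0 1) := by
  refine (integrableOn_rpow_Ioc_zero_one (r := 2 * a - (1 + s)) (by linarith)).mono'
    measurable_oscKernel.aestronglyMeasurable ?_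
  filter_upwards [ae_restrict_mem measurableSet_Ioc] with t ht
  rw [Real.norm_of_nonneg (oscKernel_nonneg ht.1.le)]
  exact oscKernel_le_rpow ha ht.1

theorem integrableOn_oscKernel_Ioi_one (ha : 0 ≤ a) (hs : 0 < s) :
    IntegrableOn (oscKernel a s) (Ioi 1) := by
  have hdom := (integrableOn_Ioi_rpow_of_lt (a := -(1 + s)) (by linarith) one_pos).const_mul (2 ^ a)
  refine hdom.mono' measurable_oscKernel.aestronglyMeasurable ?_
  filter_upwards [ae_restrict_mem measurableSet_Ioi] with t (ht : 1 < t)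
  rw [Real.norm_of_nonneg (oscKernel_nonneg (by linarith))]
  exact oscKernel_le_two_rpow_mul ha (by linarith)

theorem integrableOn_oscKernel (hs : 0 < s) (hsa : s < 2 * a) :
    IntegrableOn (oscKernel a s) (Ioi 0) := by
  rw [← Ioc_union_Ioi_eq_Ioi zero_le_one]
  exact (integrableOn_oscKernel_Ioc (by linarith) hsa).union
    (integrableOn_oscKernel_Ioi_one (by linarith) hs)

theorem integral_oscKernel_le (hs : 0 < s) (hsa : s < 2 * a) :
    ∫ t in Ioi 0, oscKernel a s t ≤ 1 / (2 * a - s) + 2 ^ a / s := by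
  have ha : 0 ≤ a := by linarith
  have hnear : ∫ t in Ioc 0 1, oscKernel a s t ≤ 1 / (2 * a - s) := by
    calc ∫ t in Ioc 0 1, oscKernel a s t ≤ ∫ t in Ioc (0 : ℝ) 1, t ^ (2 * a - (1 + s)) :=
          setIntegral_mono_on (integrableOn_oscKernel_Ioc ha hsa)
            (integrableOn_rpow_Ioc_zero_one (by linarith)) measurableSet_Ioc
            fun t ht => oscKernel_le_rpow ha ht.1
      _ = 1 / (2 * a - s) := by
          rw [integral_rpow_Ioc_zero_one (by linarith)]; ring_nf
  have hfar : ∫ t in Ioi 1, oscKernel a s t ≤ 2 ^ a / s := by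
    calc ∫ t in Ioi 1, oscKernel a s t ≤ ∫ t in Ioi (1 : ℝ), 2 ^ a * t ^ (-(1 + s)) :=
          setIntegral_mono_on (integrableOn_oscKernel_Ioi_one ha hs)
            ((integrableOn_Ioi_rpow_of_lt (by linarith) one_pos).const_mul _) measurableSet_Ioi
            fun t (ht : 1 < t) => oscKernel_le_two_rpow_mul ha (by linarith)
      _ = 2 ^ a / s := by
          rw [integral_const_mul, integral_Ioi_rpow_of_lt (by linarith) one_pos, one_rpow,
            show -(1 + s) + 1 = -s by ring, neg_div_neg_eq, mul_one_div]
  rw [← Ioc_union_Ioi_eq_Ioi zero_le_one, setIntegral_union (Ioc_disjoint_Ioi le_rfl)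
    measurableSet_Ioi (integrableOn_oscKernel_Ioc ha hsa) (integrableOn_oscKernel_Ioi_one ha hs)]
  exact add_le_add hnear hfar

theorem rpow_neg_le_oscKernel_add_oscKernel_add_pi (ha : 0 ≤ a) (hs : 0 ≤ 1 + s) (ht : 0 < t) :
    (t + π) ^ (-(1 + s)) ≤ oscKernel a s t + oscKernel a s (t + π) := by
  have htπ : 0 < t + π := by linarith [pi_pos]
  have hlow : ∀ u, 0 < u → cos u ≤ 0 → u ^ (-(1 + s)) ≤ oscKernel a s u := by
    intro u hu hcos
    rw [rpow_neg hu.le, ← one_div]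
    unfold oscKernel; gcongr
    exact one_le_rpow (by linarith) ha
  rcases le_or_gt (cos t) 0 with hcos | hcos
  · calc (t + π) ^ (-(1 + s)) ≤ t ^ (-(1 + s)) :=
          rpow_le_rpow_of_nonpos ht (by linarith [pi_pos]) (by linarith)
      _ ≤ oscKernel a s t := hlow t ht hcos
      _ ≤ _ := le_add_of_nonneg_right (oscKernel_nonneg htπ.le)
  · calc (t + π) ^ (-(1 + s)) ≤ oscKernel a s (t + π) :=
          hlow _ htπ (by rw [cos_add_pi]; linarith)
      _ ≤ _ := le_add_of_nonneg_left (oscKernel_nonneg ht.le)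

theorem pi_rpow_neg_div_le_integral_oscKernel (hs : 0 < s) (hsa : s < 2 * a) :
    π ^ (-s) / s ≤ 2 * ∫ t in Ioi 0, oscKernel a s t := by
  have hint := integrableOn_oscKernel hs hsa
  have hint_shift : IntegrableOn (fun t => oscKernel a s (t + π)) (Ioi 0) :=
    IntegrableOn.comp_add_right_Ioi <| by
      rw [zero_add]; exact hint.mono_set (Ioi_subset_Ioi pi_pos.le)
  have hdom : IntegrableOn (fun t : ℝ => (t + π) ^ (-(1 + s))) (Ioi 0) :=
    IntegrableOn.comp_add_right_Ioi (f := fun t : ℝ => t ^ (-(1 + s)))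
      (by rw [zero_add]; exact integrableOn_Ioi_rpow_of_lt (by linarith) pi_pos)
  have htail : ∫ t in Ioi π, oscKernel a s t ≤ ∫ t in Ioi 0, oscKernel a s t :=
    setIntegral_mono_set hint
      ((ae_restrict_iff' measurableSet_Ioi).mpr
        (ae_of_all _ fun t (ht : 0 < t) => oscKernel_nonneg ht.le))
      (Ioi_subset_Ioi pi_pos.le).eventuallyLE
  calc π ^ (-s) / s = ∫ t in Ioi 0, (t + π) ^ (-(1 + s)) := by
        rw [setIntegral_Ioi_comp_add_right (fun t : ℝ => t ^ (-(1 + s))), zero_add,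
          integral_Ioi_rpow_of_lt (by linarith) pi_pos, show -(1 + s) + 1 = -s by ring,
          neg_div_neg_eq]
    _ ≤ ∫ t in Ioi 0, (oscKernel a s t + oscKernel a s (t + π)) :=
        setIntegral_mono_on hdom (hint.add hint_shift) measurableSet_Ioi fun t ht =>
          rpow_neg_le_oscKernel_add_oscKernel_add_pi (by linarith) (by linarith) ht
    _ = (∫ t in Ioi 0, oscKernel a s t) + ∫ t in Ioi π, oscKernel a s t := by
        rw [integral_add hint hint_shift, setIntegral_Ioi_comp_add_right, zero_add]
    _ ≤ 2 * ∫ t in Ioi 0, oscKernel a s t := by linarith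

end oscKernel

theorem integral_oscKernel_le_eight_rpow_div {p δ : ℝ} (hp : 1 ≤ p) (hδ : 0 < δ)
    (hδ1 : δ ≤ 1) : ∫ t in Ioi 0, oscKernel (p / 2) (δ * p / 2) t ≤ 8 ^ p / δ := by
  have hs : 0 < δ * p / 2 := by positivity
  have hsp : δ * p / 2 ≤ p / 2 := by nlinarith
  set s := δ * p / 2
  have h2 : 1 ≤ (2 : ℝ) ^ (p / 2) := one_le_rpow one_le_two (by positivity)
  have hconst : 4 * (2 : ℝ) ^ (p / 2) ≤ 8 ^ p := by
    rw [show (8 : ℝ) = 4 * 2 by norm_num, mul_rpow (by norm_num) (by norm_num)]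
    exact mul_le_mul (self_le_rpow_of_one_le (by norm_num) hp)
      (rpow_le_rpow_of_exponent_le one_le_two (by linarith)) (by positivity) (by positivity)
  calc ∫ t in Ioi 0, oscKernel (p / 2) s t ≤ 1 / (2 * (p / 2) - s) + 2 ^ (p / 2) / s :=
        integral_oscKernel_le hs (by linarith)
    _ ≤ 2 ^ (p / 2) / s + 2 ^ (p / 2) / s := by
        refine add_le_add_left ?_ _
        calc 1 / (2 * (p / 2) - s) ≤ 1 / s := one_div_le_one_div_of_le hs (by linarith)
          _ ≤ 2 ^ (p / 2) / s := by gcongr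
    _ = 4 * 2 ^ (p / 2) / δ / p := by simp only [s]; field_simp; ring
    _ ≤ 4 * 2 ^ (p / 2) / δ := div_le_self (by positivity) hp
    _ ≤ 8 ^ p / δ := by gcongr

theorem quarter_rpow_div_le_integral_oscKernel {p δ : ℝ} (hp : 1 ≤ p) (hδ : 0 < δ)
    (hδ1 : δ ≤ 1) : (1 / 4) ^ p / δ ≤ ∫ t in Ioi 0, oscKernel (p / 2) (δ * p / 2) t := by
  have hs : 0 < δ * p / 2 := by positivity
  have hsp : δ * p / 2 ≤ p / 2 := by nlinarith
  set s := δ * p / 2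
  have hhalf_le_inv : (1 / 2 : ℝ) ^ p ≤ 1 / p := by
    have := one_add_mul_self_le_rpow_one_add (s := 1) (by norm_num) hp
    rw [div_rpow zero_le_one zero_le_two, one_rpow]
    exact one_div_le_one_div_of_le (by linarith) (by norm_num at this; linarith)
  have hhalf_le_pi : (1 / 2 : ℝ) ^ p ≤ π ^ (-s) := by
    calc (1 / 2 : ℝ) ^ p = (1 / 4) ^ (p / 2) := by
          rw [show (1 / 4 : ℝ) = (1 / 2) ^ (2 : ℝ) by norm_num, ← rpow_mul (by norm_num)]
          ring_nf
      _ ≤ (1 / π) ^ (p / 2) := by gcongr; exact pi_le_four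
      _ ≤ (1 / π) ^ s :=
          rpow_le_rpow_of_exponent_ge (by positivity)
            (div_le_one_of_le₀ (by linarith [pi_gt_three]) pi_pos.le) hsp
      _ = π ^ (-s) := by rw [div_rpow zero_le_one pi_pos.le, one_rpow, rpow_neg pi_pos.le, one_div]
  calc (1 / 4 : ℝ) ^ p / δ = (1 / 2) ^ p * (1 / 2) ^ p / δ := by
        rw [← mul_rpow (by norm_num) (by norm_num)]; norm_num
    _ ≤ π ^ (-s) * (1 / p) / δ := by gcongr
    _ = π ^ (-s) / s / 2 := by simp only [s]; field_simp
    _ ≤ ∫ t in Ioi 0, oscKernel (p / 2) s t := by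
        linarith [pi_rpow_neg_div_le_integral_oscKernel hs (a := p / 2) (by linarith)]

theorem rpow_div_rpow_one_div {K δ p : ℝ} (hK : 0 ≤ K) (hδ : 0 ≤ δ) (hp : p ≠ 0) :
    (K ^ p / δ) ^ (1 / p) = K * (1 / δ ^ (1 / p)) := by
  rw [div_rpow (rpow_nonneg hK _) hδ, ← rpow_mul hK, mul_one_div_cancel hp, rpow_one,
    mul_one_div]

theorem stmt3 : ∃ c C : ℝ, 0 < c ∧ 0 < C ∧ ∀ (p ε : ℝ), p ∈ Set.Ici (1:ℝ) → ε ∈ Set.Ioo (0:ℝ) 1 →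
    IntegrableOn (fun t : ℝ => (1 - Real.cos t) ^ (p/2) / t ^ (1 + (1-ε)*p/2)) (Set.Ioi 0) volume ∧
    c * (1 / (1-ε) ^ (1/p)) ≤
      (∫ t in Set.Ioi (0:ℝ), (1 - Real.cos t) ^ (p/2) / t ^ (1 + (1-ε)*p/2)) ^ (1/p) ∧
    (∫ t in Set.Ioi (0:ℝ), (1 - Real.cos t) ^ (p/2) / t ^ (1 + (1-ε)*p/2)) ^ (1/p) ≤
      C * (1 / (1-ε) ^ (1/p)) := by
  refine ⟨1 / 4, 8, by norm_num, by norm_num, fun p ε (hp : 1 ≤ p) ⟨hε0, hε1⟩ => ?_⟩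
  have hδ : 0 < 1 - ε := by linarith
  have hδ1 : 1 - ε ≤ 1 := by linarith
  have hp0 : 0 < p := by linarith
  have hI := setIntegral_nonneg (μ := volume) measurableSet_Ioi fun t (ht : 0 < t) =>
    oscKernel_nonneg (a := p / 2) (s := (1 - ε) * p / 2) ht.le
  refine ⟨integrableOn_oscKernel (by positivity) (by nlinarith), ?_, ?_⟩
  · rw [← rpow_div_rpow_one_div (by norm_num) hδ.le hp0.ne']
    exact rpow_le_rpow (by positivity) (quarter_rpow_div_le_integral_oscKernel hp hδ hδ1)
      (by positivity)
  · rw [← rpow_div_rpow_one_div (by norm_num) hδ.le hp0.ne']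
    exact rpow_le_rpow hI (integral_oscKernel_le_eight_rpow_div hp hδ hδ1) (by positivity)
end

section
/- The Korányi norm N on the Heisenberg group ℍ_n = ℝ^{2n+1} satisfies N(xy) ≤ N(x) + N(y) for all x, y ∈ ℝ^{2n+1}, and hence d_N(x,y) := N(x⁻¹y) defines a left-invariant metric on ℍ_n. -/
open MeasureTheory Real

noncomputable section

/-- The Heisenberg group `ℍ_n`, presented as `ℝⁿ × ℝⁿ × ℝ ≅ ℝ^{2n+1}`. -/
abbrev Heis (n : ℕ) : Type := (Fin n → ℝ) × (Fin n → ℝ) × ℝ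

/-- The Heisenberg group product. -/
def Hmul {n : ℕ} (x y : Heis n) : Heis n :=
  (x.1 + y.1, x.2.1 + y.2.1,
    x.2.2 + y.2.2 - 2 * (∑ i, x.1 i * y.2.1 i) + 2 * (∑ i, x.2.1 i * y.1 i))

/-- The Heisenberg group inverse, `x⁻¹ = -x`. -/
def Hinv {n : ℕ} (x : Heis n) : Heis n := (-x.1, -x.2.1, -x.2.2)

/-- The Korányi norm `N(x) = (‖π(x)‖₂⁴ + x_{2n+1}²)^{1/4}`. -/
def KN {n : ℕ} (x : Heis n) : ℝ :=
  (((∑ i, x.1 i ^ 2) + ∑ i, x.2.1 i ^ 2) ^ 2 + x.2.2 ^ 2) ^ ((1:ℝ)/4)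

/-- The left-invariant Korányi metric `d_N(x,y) = N(x⁻¹ y)`. -/
def dN {n : ℕ} (x y : Heis n) : ℝ := KN (Hmul (Hinv x) y)

/-- The Heisenberg dilation `δ_θ`. -/
def Hdil {n : ℕ} (θ : ℝ) (x : Heis n) : Heis n := (θ • x.1, θ • x.2.1, θ^2 * x.2.2)

end

/-!
Identify the horizontal part of `x = (a, b, t)` with `z = a + i b ∈ ℂⁿ` (and that of `y`
with `w`) and put `φ(x) = |z|² + i t ∈ ℂ` (`Heis.gauge`), so that `N(x) = |φ(x)|^{1/2}`.
The group law becomes `φ(xy) = φ(x) + φ(y) + 2 ⟪w, z⟫`, hence by Cauchy–Schwarz and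
`|z|² ≤ |φ(x)|`, `|φ(xy)| ≤ N(x)² + N(y)² + 2 N(x) N(y) = (N(x) + N(y))²`.
-/

open Matrix
open scoped InnerProductSpace

namespace Heis

variable {n : ℕ}

lemma Hmul_eq (x y : Heis n) :
    Hmul x y =
      (x.1 + y.1, x.2.1 + y.2.1, x.2.2 + y.2.2 - 2 * x.1 ⬝ᵥ y.2.1 + 2 * x.2.1 ⬝ᵥ y.1) :=
  rfl

lemma Hmul_assoc (x y z : Heis n) : Hmul (Hmul x y) z = Hmul x (Hmul y z) := by
  simp only [Hmul_eq, add_dotProduct, dotProduct_add, Prod.mk.injEq, add_assoc, true_and]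
  ring

lemma Hmul_zero (x : Heis n) : Hmul x 0 = x := by
  simp [Hmul_eq]

lemma Hmul_Hinv_cancel_left (x y : Heis n) : Hmul x (Hmul (Hinv x) y) = y := by
  simp only [Hmul_eq, Hinv, Prod.ext_iff, add_neg_cancel_left, neg_dotProduct, dotProduct_add,
    dotProduct_neg, dotProduct_comm x.2.1 x.1, true_and]
  ring

lemma Hinv_Hinv (x : Heis n) : Hinv (Hinv x) = x := by
  simp [Hinv]

lemma Hinv_Hmul_cancel_left (x y : Heis n) : Hmul (Hinv x) (Hmul x y) = y := by
  simpa only [Hinv_Hinv] using Hmul_Hinv_cancel_left (Hinv x) y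

lemma Hinv_Hmul_self (x : Heis n) : Hmul (Hinv x) x = 0 := by
  simpa only [Hmul_zero] using Hinv_Hmul_cancel_left x 0

lemma Hinv_Hmul (x y : Heis n) : Hinv (Hmul x y) = Hmul (Hinv y) (Hinv x) := by
  simp only [Hmul_eq, Hinv, neg_dotProduct, dotProduct_neg, neg_neg, Prod.mk.injEq, neg_add_rev,
    add_comm, true_and, dotProduct_comm y.1, dotProduct_comm y.2.1]
  ring

lemma KN_Hinv (x : Heis n) : KN (Hinv x) = KN x := by
  simp [KN, Hinv]

def horizontal (x : Heis n) : EuclideanSpace ℂ (Fin n) :=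
  WithLp.toLp 2 fun i => ⟨x.1 i, x.2.1 i⟩

noncomputable def gauge (x : Heis n) : ℂ := ⟨‖horizontal x‖ ^ 2, x.2.2⟩

lemma norm_horizontal_sq (x : Heis n) :
    ‖horizontal x‖ ^ 2 = ∑ i, x.1 i ^ 2 + ∑ i, x.2.1 i ^ 2 := by
  rw [EuclideanSpace.norm_sq_eq, ← Finset.sum_add_distrib]
  refine Finset.sum_congr rfl fun i _ => ?_
  simp only [horizontal, PiLp.toLp_apply, Complex.sq_norm, Complex.normSq_mk]
  ring

lemma inner_horizontal (x y : Heis n) :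
    ⟪horizontal x, horizontal y⟫_ℂ =
      ⟨x.1 ⬝ᵥ y.1 + x.2.1 ⬝ᵥ y.2.1, x.1 ⬝ᵥ y.2.1 - x.2.1 ⬝ᵥ y.1⟩ := by
  simp only [PiLp.inner_apply, RCLike.inner_apply, horizontal, dotProduct]
  apply Complex.ext
  · simp [Complex.re_sum, Finset.sum_add_distrib, mul_comm]
  · simp [Complex.im_sum, Finset.sum_add_distrib, mul_comm]
    ring

lemma horizontal_Hmul (x y : Heis n) : horizontal (Hmul x y) = horizontal x + horizontal y := by
  ext i
  simp [horizontal, Hmul, Complex.ext_iff]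

lemma gauge_Hmul (x y : Heis n) :
    gauge (Hmul x y) = gauge x + gauge y + 2 * ⟪horizontal y, horizontal x⟫_ℂ := by
  apply Complex.ext
  · simp [gauge, horizontal_Hmul, norm_add_sq (𝕜 := ℂ),
      inner_re_symm (𝕜 := ℂ) (horizontal x)]
    ring
  · simp [gauge, Hmul_eq, inner_horizontal, dotProduct_comm y.1, dotProduct_comm y.2.1]
    ring

lemma KN_eq_sqrt_norm_gauge (x : Heis n) : KN x = √‖gauge x‖ := by
  have h : (‖horizontal x‖ ^ 2) ^ 2 + x.2.2 ^ 2 = ‖gauge x‖ ^ 2 := by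
    rw [Complex.sq_norm, gauge, Complex.normSq_mk]
    ring
  rw [KN, ← norm_horizontal_sq, h, Real.sqrt_eq_rpow, ← Real.rpow_natCast,
    ← Real.rpow_mul (norm_nonneg _)]
  norm_num

lemma KN_nonneg (x : Heis n) : 0 ≤ KN x := by
  rw [KN_eq_sqrt_norm_gauge]
  exact Real.sqrt_nonneg _

lemma norm_horizontal_le_KN (x : Heis n) : ‖horizontal x‖ ≤ KN x := by
  rw [KN_eq_sqrt_norm_gauge, Real.le_sqrt (norm_nonneg _) (norm_nonneg _)]
  exact Complex.re_le_norm (gauge x)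

lemma KN_Hmul_le (x y : Heis n) : KN (Hmul x y) ≤ KN x + KN y := by
  have hgx : ‖gauge x‖ = KN x ^ 2 := by
    rw [KN_eq_sqrt_norm_gauge, Real.sq_sqrt (norm_nonneg _)]
  have hgy : ‖gauge y‖ = KN y ^ 2 := by
    rw [KN_eq_sqrt_norm_gauge, Real.sq_sqrt (norm_nonneg _)]
  rw [KN_eq_sqrt_norm_gauge, Real.sqrt_le_left (add_nonneg (KN_nonneg x) (KN_nonneg y))]
  calc ‖gauge (Hmul x y)‖
      ≤ ‖gauge x‖ + ‖gauge y‖ + 2 * ‖⟪horizontal y, horizontal x⟫_ℂ‖ := by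
        rw [gauge_Hmul]
        refine (norm_add_le _ _).trans ?_
        simp only [norm_mul, Complex.norm_ofNat]
        gcongr
        exact norm_add_le _ _
    _ ≤ KN x ^ 2 + KN y ^ 2 + 2 * (KN y * KN x) := by
        rw [hgx, hgy]
        gcongr
        exact (norm_inner_le_norm _ _).trans <|
          mul_le_mul (norm_horizontal_le_KN y) (norm_horizontal_le_KN x) (norm_nonneg _)
            (KN_nonneg y)
    _ = (KN x + KN y) ^ 2 := by ring

lemma horizontal_eq_zero_iff (x : Heis n) : horizontal x = 0 ↔ x.1 = 0 ∧ x.2.1 = 0 := by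
  simp [horizontal, funext_iff, Complex.ext_iff, forall_and]

lemma KN_eq_zero_iff (x : Heis n) : KN x = 0 ↔ x = 0 := by
  rw [KN_eq_sqrt_norm_gauge, Real.sqrt_eq_zero (norm_nonneg _), norm_eq_zero, gauge,
    Complex.ext_iff]
  simp [horizontal_eq_zero_iff, Prod.ext_iff, and_assoc]

end Heis

open Heis

theorem stmt4 (n : ℕ) :
    (∀ x y : Heis n, KN (Hmul x y) ≤ KN x + KN y) ∧
    (∀ x y : Heis n, dN x y = 0 ↔ x = y) ∧
    (∀ x y : Heis n, dN x y = dN y x) ∧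
    (∀ x y z : Heis n, dN x z ≤ dN x y + dN y z) ∧
    (∀ a x y : Heis n, dN (Hmul a x) (Hmul a y) = dN x y) := by
  refine ⟨KN_Hmul_le, fun x y => ?_, fun x y => ?_, fun x y z => ?_, fun a x y => ?_⟩
  · rw [dN, KN_eq_zero_iff]
    constructor
    · intro h
      rw [← Hmul_Hinv_cancel_left x y, h, Hmul_zero]
    · rintro rfl
      exact Hinv_Hmul_self x
  · rw [dN, dN, ← KN_Hinv, Hinv_Hmul, Hinv_Hinv]
  · calc dN x z = KN (Hmul (Hmul (Hinv x) y) (Hmul (Hinv y) z)) := by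
          rw [dN, Hmul_assoc, Hmul_Hinv_cancel_left]
      _ ≤ dN x y + dN y z := KN_Hmul_le _ _
  · rw [dN, dN, Hinv_Hmul, Hmul_assoc, Hinv_Hmul_cancel_left]
end

section
/- Let g(x) = e^{-‖x‖₂²/2} on ℝⁿ and let σ_λ be the Schrödinger representation of ℍ_n on L²(ℝⁿ,ℂ). Then for every (u,v,w) ∈ ℍ_n and λ > 0, ‖g - σ_λ(u,v,w)g‖²_{L²(ℝⁿ)} = 2π^{n/2}(1 - e^{-λ(‖u‖₂² + ‖v‖₂²)} cos(λw)). -/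
open MeasureTheory Real

noncomputable section

/-- The Schrödinger representation `σ_λ` of `ℍ_n` on `L²(ℝⁿ, ℂ)`:
`(σ_λ(u,v,w)h)(x) = exp(iλ(w - 2⟨u,v⟩) + 2i√λ⟨v,x⟩) h(x - 2√λ u)`. -/
def schrodinger {n : ℕ} (lam : ℝ) (g : Heis n) (h : (Fin n → ℝ) → ℂ) : (Fin n → ℝ) → ℂ :=
  fun x => Complex.exp (Complex.I *
      (((lam * (g.2.2 - 2 * ∑ i, g.1 i * g.2.1 i) : ℝ) : ℂ) +
        ((2 * Real.sqrt lam * ∑ i, g.2.1 i * x i : ℝ) : ℂ))) *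
    h (x - (2 * Real.sqrt lam) • g.1)

end

/-- The Gaussian `g(x) = e^{-‖x‖₂²/2}`, viewed as a complex-valued function on `ℝⁿ`. -/
noncomputable def gauss (n : ℕ) : (Fin n → ℝ) → ℂ :=
  fun x => ((Real.exp (-(∑ i, x i ^ 2) / 2) : ℝ) : ℂ)

/-!
Expand `‖g - σg‖² = ‖g‖² + ‖σg‖² - 2 Re ⟪g, σg⟫`. Since `σ_λ(u,v,w)` multiplies a translate by a
unimodular phase, `‖σg‖² = ‖g‖²`, and `‖g‖² = π^{n/2}`. The pointwise product `g · σg` is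
`exp (-‖x‖² + ⟨c, x⟩ + d)` with `c = 2√λ (u + i v)`, so by the complex Gaussian integral
`⟪g, σg⟫ = π^{n/2} exp (∑ cᵢ² / 4 + d) = π^{n/2} e^{-λ(‖u‖² + ‖v‖²)} e^{iλw}`.
-/

open ComplexConjugate

theorem integral_norm_sub_sq {α : Type*} [MeasurableSpace α] {μ : Measure α} {f g : α → ℂ}
    (hf : Integrable (fun x => ‖f x‖ ^ 2) μ) (hg : Integrable (fun x => ‖g x‖ ^ 2) μ)
    (hfg : Integrable (fun x => conj (f x) * g x) μ) :
    ∫ x, ‖f x - g x‖ ^ 2 ∂μ =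
      ∫ x, ‖f x‖ ^ 2 ∂μ + ∫ x, ‖g x‖ ^ 2 ∂μ - 2 * (∫ x, conj (f x) * g x ∂μ).re := by
  have hpt : ∀ x, ‖f x - g x‖ ^ 2 = ‖f x‖ ^ 2 + ‖g x‖ ^ 2 - 2 * (conj (f x) * g x).re := by
    intro x
    simp only [Complex.sq_norm, Complex.normSq_sub, ← Complex.conj_re (f x * _), map_mul,
      Complex.conj_conj, mul_comm (conj (f x))]
  have hsum : Integrable (fun x => ‖f x‖ ^ 2 + ‖g x‖ ^ 2) μ := hf.add hg
  have hre : Integrable (fun x => 2 * (conj (f x) * g x).re) μ := hfg.re.const_mul 2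
  simp_rw [hpt]
  rw [integral_sub hsum hre, integral_add hf hg, integral_const_mul]
  congr 2
  exact integral_re hfg

section Schrodinger

variable {n : ℕ}

theorem norm_schrodinger_apply (lam : ℝ) (g : Heis n) (h : (Fin n → ℝ) → ℂ) (x : Fin n → ℝ) :
    ‖schrodinger lam g h x‖ = ‖h (x - (2 * √lam) • g.1)‖ := by
  rw [schrodinger, norm_mul, ← Complex.ofReal_add, Complex.norm_exp_I_mul_ofReal, one_mul]

theorem integral_norm_schrodinger_sq (lam : ℝ) (g : Heis n) (h : (Fin n → ℝ) → ℂ) :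
    ∫ x, ‖schrodinger lam g h x‖ ^ 2 = ∫ x, ‖h x‖ ^ 2 := by
  simp_rw [norm_schrodinger_apply]
  exact integral_sub_right_eq_self (fun x => ‖h x‖ ^ 2) _

theorem integrable_norm_schrodinger_sq (lam : ℝ) (g : Heis n) {h : (Fin n → ℝ) → ℂ}
    (hh : Integrable (fun x => ‖h x‖ ^ 2)) :
    Integrable (fun x => ‖schrodinger lam g h x‖ ^ 2) := by
  simp_rw [norm_schrodinger_apply]
  exact hh.comp_sub_right _

theorem schrodinger_zero_left (g : Heis n) (h : (Fin n → ℝ) → ℂ) : schrodinger 0 g h = h := by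
  ext x
  simp [schrodinger]

-- The exponent is put in the shape `-‖x‖² + ⟨c, x⟩` required by `integral_cexp_neg_mul_sum_add`.
theorem conj_gauss_mul_schrodinger_gauss {lam : ℝ} (hlam : 0 ≤ lam) (g : Heis n)
    (x : Fin n → ℝ) :
    conj (gauss n x) * schrodinger lam g (gauss n) x =
      Complex.exp (-1 * ∑ i, (x i : ℂ) ^ 2 +
          ∑ i, (2 * √lam * (g.1 i + g.2.1 i * Complex.I) : ℂ) * x i) *
        Complex.exp (lam * (g.2.2 - 2 * ∑ i, g.1 i * g.2.1 i) * Complex.I -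
          2 * lam * ∑ i, g.1 i ^ 2) := by
  have hs : ((√lam : ℝ) : ℂ) ^ 2 = lam := by exact_mod_cast sq_sqrt hlam
  have hshift : ∑ i, ((x i : ℂ) - 2 * √lam * g.1 i) ^ 2 = ∑ i, (x i : ℂ) ^ 2 -
      4 * √lam * ∑ i, (g.1 i : ℂ) * x i + 4 * (√lam : ℂ) ^ 2 * ∑ i, (g.1 i : ℂ) ^ 2 := by
    rw [Finset.mul_sum, Finset.mul_sum, ← Finset.sum_sub_distrib, ← Finset.sum_add_distrib]
    exact Finset.sum_congr rfl fun i _ => by ring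
  have hlin : ∑ i, 2 * √lam * ((g.1 i : ℂ) + g.2.1 i * Complex.I) * x i =
      2 * √lam * ∑ i, (g.1 i : ℂ) * x i + 2 * √lam * Complex.I * ∑ i, (g.2.1 i : ℂ) * x i := by
    rw [Finset.mul_sum, Finset.mul_sum, ← Finset.sum_add_distrib]
    exact Finset.sum_congr rfl fun i _ => by ring
  simp only [gauss, Complex.conj_ofReal]
  simp only [schrodinger, gauss, Complex.ofReal_exp, ← Complex.exp_add, Pi.sub_apply,
    Pi.smul_apply, smul_eq_mul]
  push_cast
  rw [hshift, hlin]
  congr 1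
  linear_combination (-2 * ∑ i, (g.1 i : ℂ) ^ 2) * hs

theorem integrable_conj_gauss_mul_schrodinger_gauss {lam : ℝ} (hlam : 0 ≤ lam) (g : Heis n) :
    Integrable (fun x => conj (gauss n x) * schrodinger lam g (gauss n) x) := by
  simp_rw [conj_gauss_mul_schrodinger_gauss hlam]
  exact (GaussianFourier.integrable_cexp_neg_mul_sum_add (by norm_num) _).mul_const _

theorem integral_conj_gauss_mul_schrodinger_gauss {lam : ℝ} (hlam : 0 ≤ lam) (g : Heis n) :
    ∫ x, conj (gauss n x) * schrodinger lam g (gauss n) x =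
      (π ^ ((n : ℝ) / 2) : ℝ) *
        Complex.exp (((-lam * (∑ i, g.1 i ^ 2 + ∑ i, g.2.1 i ^ 2) : ℝ) : ℂ) +
          ((lam * g.2.2 : ℝ) : ℂ) * Complex.I) := by
  have hs : ((√lam : ℝ) : ℂ) ^ 2 = lam := by exact_mod_cast sq_sqrt hlam
  have hc : ∑ i, (2 * √lam * ((g.1 i : ℂ) + g.2.1 i * Complex.I)) ^ 2 =
      4 * (√lam : ℂ) ^ 2 * (∑ i, (g.1 i : ℂ) ^ 2 - ∑ i, (g.2.1 i : ℂ) ^ 2 +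
        2 * Complex.I * ∑ i, (g.1 i : ℂ) * g.2.1 i) := by
    simp only [Finset.mul_sum, ← Finset.sum_sub_distrib, ← Finset.sum_add_distrib]
    refine Finset.sum_congr rfl fun i _ => ?_
    linear_combination (4 * (√lam : ℂ) ^ 2 * g.2.1 i ^ 2) * Complex.I_sq
  simp_rw [conj_gauss_mul_schrodinger_gauss hlam]
  rw [integral_mul_const, GaussianFourier.integral_cexp_neg_mul_sum_add (by norm_num), hc,
    mul_assoc, ← Complex.exp_add, Complex.ofReal_cpow pi_pos.le]
  push_cast
  simp only [Fintype.card_fin, div_one, mul_one]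
  congr 2
  linear_combination (∑ i, (g.1 i : ℂ) ^ 2 - ∑ i, (g.2.1 i : ℂ) ^ 2 +
    2 * Complex.I * ∑ i, (g.1 i : ℂ) * g.2.1 i) * hs

-- `σ_0` is the identity, so the Gaussian's own norm is the cross term at `λ = 0`.
theorem integrable_norm_gauss_sq (n : ℕ) : Integrable (fun x => ‖gauss n x‖ ^ 2) := by
  simpa [schrodinger_zero_left, sq] using
    (integrable_conj_gauss_mul_schrodinger_gauss le_rfl 0).norm

theorem integral_norm_gauss_sq (n : ℕ) : ∫ x, ‖gauss n x‖ ^ 2 = π ^ ((n : ℝ) / 2) := by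
  have hsq : ∀ x, conj (gauss n x) * gauss n x = ((‖gauss n x‖ ^ 2 : ℝ) : ℂ) := fun x => by
    rw [Complex.conj_mul', Complex.ofReal_pow]
  have h := integral_conj_gauss_mul_schrodinger_gauss (n := n) le_rfl 0
  simp only [schrodinger_zero_left, hsq, integral_complex_ofReal] at h
  simpa using h

end Schrodinger

theorem stmt17 (n : ℕ) (lam : ℝ) (hlam : 0 < lam) (g : Heis n) :
    ∫ x : Fin n → ℝ, ‖gauss n x - schrodinger lam g (gauss n) x‖ ^ 2 =
      2 * Real.pi ^ ((n:ℝ)/2) *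
        (1 - Real.exp (-lam * ((∑ i, g.1 i ^ 2) + ∑ i, g.2.1 i ^ 2)) * Real.cos (lam * g.2.2)) := by
  rw [integral_norm_sub_sq (integrable_norm_gauss_sq n)
      (integrable_norm_schrodinger_sq lam g (integrable_norm_gauss_sq n))
      (integrable_conj_gauss_mul_schrodinger_gauss hlam.le g),
    integral_norm_schrodinger_sq, integral_norm_gauss_sq,
    integral_conj_gauss_mul_schrodinger_gauss hlam.le g, Complex.exp_add,
    ← Complex.ofReal_exp, ← mul_assoc, ← Complex.ofReal_mul, Complex.re_ofReal_mul,
    Complex.exp_ofReal_mul_I_re]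
  ring
end
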